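/- Let X be a Hausdorff topological space and F a sheaf of ℚ-modules on X. For every natural number k and every point x ∈ X \ X^(k), the stalk at x of the k-th term C^k(F) of the Godement resolution of F is zero: C^k(F)_x = 0. -/

import Mathlib

open CategoryTheory CategoryTheory.Limits TopCat TopologicalSpace Opposite

attribute [local instance] Classical.propDecidable

noncomputable section

/-- The Cantor–Bendixson derivative of a set `A`: the set of points of `A` that are not
isolated in the subspace `A`, i.e. the points of `A` that are accumulation points of `A`. -/
def cbDeriv {X : Type*} [TopologicalSpace X] (A : Set X) : Set X :=
  {x ∈ A | AccPt x (Filter.principal A)}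

/-- The finite Cantor–Bendixson derivatives of the space: `cbIter X k = X^(k)`. -/
def cbIter (X : Type*) [TopologicalSpace X] (k : ℕ) : Set X :=
  cbDeriv^[k] Set.univ

/-- The abelian category of sheaves of `ℚ`-modules on the topological space `X`. -/
abbrev SheafQ (X : TopCat.{0}) : Type 1 :=
  Sheaf (Opens.grothendieckTopology X) (ModuleCat.{0} ℚ)

variable (X : TopCat.{0})

/-- The skyscraper sheaf `ι_x(M)` at the point `x` with value the `ℚ`-module `M`. -/
def skyQ (x : X) (M : ModuleCat.{0} ℚ) : SheafQ X := skyscraperSheaf x M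

/-- The stalk `F_x` of a sheaf of `ℚ`-modules at a point `x`. -/
def stalkAt (F : SheafQ X) (x : X) : ModuleCat.{0} ℚ := TopCat.Presheaf.stalk F.val x

/-- The zeroth term of the Godement resolution: `C^0(F) = ∏_{y ∈ X} ι_y(F_y)`, the product
of the skyscraper sheaves on the stalks of `F`. -/
def godC0 (F : SheafQ X) : SheafQ X := ∏ᶜ fun y : X => skyQ X y (stalkAt X F y)

/-- The canonical monomorphism `δ_0 : F ⟶ C^0(F)` sending a section to its family of germs;
its component at `y` is the unit of the adjunction (stalk at `y`) ⊣ (skyscraper at `y`). -/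
def godDelta0 (F : SheafQ X) : F ⟶ godC0 X F :=
  Limits.Pi.lift fun y : X => (stalkSkyscraperSheafAdjunction y).unit.app F

/-- The cokernel sequence of the Godement resolution: `godCoker F 0 = F` and
`godCoker F (k+1) = coker (δ : godCoker F k ⟶ C^0(godCoker F k))`, i.e. `coker δ_k`. -/
def godCoker (F : SheafQ X) : ℕ → SheafQ X
  | 0 => F
  | k + 1 => cokernel (godDelta0 X (godCoker F k))

/-- The `k`-th term of the Godement resolution of `F`: `C^k(F) = C^0(coker δ_{k-1})`. -/
def godC (F : SheafQ X) (k : ℕ) : SheafQ X := godC0 X (godCoker X F k)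

/-!
The stalk at `x` of `C^0(G) = ∏_y ι_y(G_y)` only sees the factors with `y` near `x`: if the
stalks of `G` vanish on a punctured neighbourhood of `x`, the projection `C^0(G) → ι_x(G_x)` is
injective on stalks at `x`. Since `δ_0` followed by that projection is the unit `G → ι_x(G_x)`,
an isomorphism on stalks at `x`, the stalk of `δ_0` at `x` is an isomorphism and
`(coker δ_0)_x = 0`. As `X^(k+1)` is the derived set of the closed set `X^(k)`, a point outside
`X^(k+1)` has a neighbourhood meeting `X^(k)` at most in itself, so by induction the stalks of
`coker δ_{k-1}` vanish off `X^(k)`, and hence so do those of `C^k(F) = C^0(coker δ_{k-1})` on the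
open set `X \ X^(k)`.
-/

theorem CategoryTheory.isIso_of_isIso_comp_of_mono {C : Type*} [Category C] {A B D : C}
    (f : A ⟶ B) (g : B ⟶ D) [IsIso (f ≫ g)] [Mono g] : IsIso f := by
  have : IsSplitEpi g := .mk' ⟨inv (f ≫ g) ≫ f, by simp⟩
  have := isIso_of_mono_of_isSplitEpi g
  exact IsIso.of_isIso_comp_right f g

theorem CategoryTheory.Adjunction.isIso_map_unit_app {C D : Type*} [Category C] [Category D]
    {L : C ⥤ D} {R : D ⥤ C} (adj : L ⊣ R) (A : C) [IsIso (adj.counit.app (L.obj A))] :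
    IsIso (L.map (adj.unit.app A)) := by
  have : IsIso (L.map (adj.unit.app A) ≫ adj.counit.app (L.obj A)) := by
    rw [adj.left_triangle_components A]; exact IsIso.id _
  exact IsIso.of_isIso_comp_right _ (adj.counit.app (L.obj A))

section CantorBendixson

variable {X : Type*} [TopologicalSpace X] [T1Space X]

theorem isClosed_cbIter (k : ℕ) : IsClosed (cbIter X k) := by
  induction k with
  | zero => exact isClosed_univ
  | succ k ih =>
    rw [cbIter, Function.iterate_succ_apply']
    exact ih.inter (isClosed_derivedSet _)

theorem cbIter_succ (k : ℕ) : cbIter X (k + 1) = derivedSet (cbIter X k) := by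
  rw [cbIter, Function.iterate_succ_apply']
  exact Set.inter_eq_right.mpr ((isClosed_iff_derivedSet_subset _).mp (isClosed_cbIter k))

theorem exists_isOpen_inter_cbIter_subset_singleton {k : ℕ} {x : X}
    (hx : x ∉ cbIter X (k + 1)) :
    ∃ V : Set X, IsOpen V ∧ x ∈ V ∧ V ∩ cbIter X k ⊆ {x} := by
  rw [cbIter_succ, mem_derivedSet, accPt_iff_nhds] at hx
  push Not at hx
  obtain ⟨U, hU, hUx⟩ := hx
  obtain ⟨V, hVU, hV, hxV⟩ := mem_nhds_iff.mp hU
  exact ⟨V, hV, hxV, fun y hy => hUx y ⟨hVU hy.1, hy.2⟩⟩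

end CantorBendixson

section Godement

variable {X}

abbrev sheafStalkFunctor (x : X) : SheafQ X ⥤ ModuleCat.{0} ℚ :=
  Sheaf.forget (ModuleCat.{0} ℚ) X ⋙ Presheaf.stalkFunctor (ModuleCat.{0} ℚ) x

-- Fixes the coefficient category, which is otherwise left for instance search to guess.
abbrev stalkSkyQAdjunction (x : X) : sheafStalkFunctor x ⊣ skyscraperSheafFunctor x :=
  stalkSkyscraperSheafAdjunction x

def godC0Proj (G : SheafQ X) (y : X) : godC0 X G ⟶ skyQ X y (stalkAt X G y) :=
  Pi.π _ y

theorem godDelta0_comp_godC0Proj (G : SheafQ X) (y : X) :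
    godDelta0 X G ≫ godC0Proj G y = (stalkSkyQAdjunction y).unit.app G :=
  Pi.lift_π _ _

theorem godC0_sections_ext (G : SheafQ X) {W : Opens X}
    (s t : (godC0 X G).obj.obj (op W))
    (h : ∀ y : X, (godC0Proj G y).hom.app (op W) s
        = (godC0Proj G y).hom.app (op W) t) : s = t := by
  let D := Discrete.functor fun y : X => skyQ X y (stalkAt X G y)
  let E : SheafQ X ⥤ ModuleCat.{0} ℚ :=
    sheafToPresheaf _ _ ⋙ (evaluation (Opens X)ᵒᵖ (ModuleCat.{0} ℚ)).obj (op W)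
  exact Concrete.isLimit_ext (D ⋙ E) (isLimitOfPreserves E (limit.isLimit D)) s t
    (fun j => h j.as)

theorem isZero_skyQ_sections {y : X} {M : ModuleCat.{0} ℚ} {W : Opens X}
    (h : y ∈ W → IsZero M) : IsZero ((skyQ X y M).obj.obj (op W)) := by
  by_cases hy : y ∈ W
  · exact (h hy).of_iso (eqToIso (if_pos hy))
  · exact (isTerminalSkyscraperSheafObjObjOfNotMem (A := M) (U := op W) hy).isZero

theorem germ_skyscraperPresheaf_injective (x : X) (M : ModuleCat.{0} ℚ) {U : Opens X}
    (hxU : x ∈ U) : Function.Injective ((skyscraperPresheaf x M).germ U x hxU) := by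
  have : IsSplitMono ((skyscraperPresheaf x M).germ U x hxU) := .mk'
    ⟨(skyscraperPresheafStalkOfSpecializes x M specializes_rfl).hom ≫ eqToHom (if_pos hxU).symm,
      by rw [germ_skyscraperPresheafStalkOfSpecializes_hom_assoc]
         exact (eqToHom_trans _ _).trans (eqToHom_refl _ _)⟩
  exact (ModuleCat.mono_iff_injective _).mp inferInstance

instance (x : X) (M : ModuleCat.{0} ℚ) :
    IsIso ((stalkSkyQAdjunction x).counit.app M) :=
  inferInstanceAs (IsIso (skyscraperPresheafStalkOfSpecializes x M specializes_rfl).hom)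

theorem mono_stalk_map_godC0Proj (G : SheafQ X) {x : X} {V : Opens X} (hxV : x ∈ V)
    (hV : ∀ y ∈ V, y ≠ x → IsZero (stalkAt X G y)) :
    Mono ((sheafStalkFunctor x).map (godC0Proj G x)) := by
  rw [ModuleCat.mono_iff_injective, injective_iff_map_eq_zero]
  intro t ht
  obtain ⟨U, hxU, s, rfl⟩ := Presheaf.exists_germ_eq (godC0 X G).obj t
  have hs : (godC0Proj G x).hom.app (op U) s = 0 := germ_skyscraperPresheaf_injective x _ hxU <|
    ((Presheaf.stalkFunctor_map_germ_apply U x hxU (godC0Proj G x).hom s).symm.trans ht).trans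
      (map_zero _).symm
  have hres : (godC0 X G).obj.map (homOfLE inf_le_left : U ⊓ V ⟶ U).op s = 0 := by
    apply godC0_sections_ext
    intro y
    by_cases hyx : y = x
    · subst hyx
      rw [map_zero, NatTrans.naturality_apply, hs, map_zero]
    · have := ModuleCat.subsingleton_of_isZero
        (isZero_skyQ_sections (M := stalkAt X G y) (W := U ⊓ V) fun hy => hV y hy.2 hyx)
      exact Subsingleton.elim _ _
  rw [← Presheaf.germ_res_apply _ (homOfLE inf_le_left) x ⟨hxU, hxV⟩, hres]
  exact map_zero _

theorem isIso_stalk_map_godDelta0 (G : SheafQ X) {x : X} {V : Opens X} (hxV : x ∈ V)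
    (hV : ∀ y ∈ V, y ≠ x → IsZero (stalkAt X G y)) :
    IsIso ((sheafStalkFunctor x).map (godDelta0 X G)) := by
  have := mono_stalk_map_godC0Proj G hxV hV
  have : IsIso ((sheafStalkFunctor x).map (godDelta0 X G) ≫
      (sheafStalkFunctor x).map (godC0Proj G x)) := by
    rw [← Functor.map_comp, godDelta0_comp_godC0Proj]
    exact (stalkSkyQAdjunction x).isIso_map_unit_app G
  exact isIso_of_isIso_comp_of_mono _ ((sheafStalkFunctor x).map (godC0Proj G x))

theorem isZero_stalk_godC0 (G : SheafQ X) {x : X} {V : Opens X} (hxV : x ∈ V)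
    (hV : ∀ y ∈ V, IsZero (stalkAt X G y)) : IsZero (stalkAt X (godC0 X G) x) :=
  have := isIso_stalk_map_godDelta0 G hxV fun y hy _ => hV y hy
  (hV x hxV).of_iso (asIso ((sheafStalkFunctor x).map (godDelta0 X G))).symm

theorem isZero_stalk_cokernel {G H : SheafQ X} (f : G ⟶ H) (x : X)
    [Epi ((sheafStalkFunctor x).map f)] : IsZero (stalkAt X (cokernel f) x) := by
  have : PreservesColimits (sheafStalkFunctor x) :=
    (stalkSkyQAdjunction x).leftAdjoint_preservesColimits
  exact (isZero_cokernel_of_epi _).of_iso (PreservesCokernel.iso (sheafStalkFunctor x) f)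

theorem isZero_stalk_godCoker [T1Space X] (F : SheafQ X) {k : ℕ} {x : X}
    (hx : x ∉ cbIter X k) : IsZero (stalkAt X (godCoker X F k) x) := by
  induction k generalizing x with
  | zero => exact absurd (Set.mem_univ x) hx
  | succ k ih =>
    obtain ⟨V, hV, hxV, hVk⟩ := exists_isOpen_inter_cbIter_subset_singleton hx
    have := isIso_stalk_map_godDelta0 (godCoker X F k) (V := ⟨V, hV⟩) hxV
      fun y hy hyx => ih fun hyk => hyx (hVk ⟨hy, hyk⟩)
    exact isZero_stalk_cokernel (godDelta0 X (godCoker X F k)) x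

end Godement

/-- For a Hausdorff space `X`, a sheaf `F` of `ℚ`-modules on `X`, a natural
number `k` and a point `x ∈ X \ X^(k)`, the stalk at `x` of the `k`-th term of the Godement
resolution of `F` vanishes: `C^k(F)_x = 0`. -/
theorem stmt3 [T2Space X] (F : SheafQ X) (k : ℕ) (x : X)
    (hx : x ∉ cbIter X k) :
    IsZero (stalkAt X (godC X F k) x) :=
  isZero_stalk_godC0 (godCoker X F k) (V := ⟨_, (isClosed_cbIter k).isOpen_compl⟩) hx
    fun _ hy => isZero_stalk_godCoker F hy

end
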